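/- arXiv:1408.4505 — 3 statements merged into one kernel-verified Lean document; each statement's English description precedes it below -/
import Mathlib

section
/- Let S be a finite set of primes each greater than log x, choose a_s uniformly and independently at random for s ∈ S, and let q_1 ≠ q_2 be integers with |q_1 - q_2| ≤ y ≤ x log x. Then the probability that both q_1 and q_2 avoid all classes a_s mod s equals (1 + o(1)) γ^2 as x → ∞, where γ = ∏_{s∈S}(1 - 1/s). -/
open scoped Classical

/-!
The classes are independent, so the probability factors as `∏_{s ∈ S} p_s` with
`p_s = 1 - 2/s`, or `p_s = 1 - 1/s` when `s ∣ q₁ - q₂`. Against `(1 - 1/s)²`, a factor of the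
first kind loses at most `1 - 2/s²`, and `∑_{s > log x} 2/s² ≤ 4/log x`. A factor of the second
kind gains at most `1 + 2/s ≤ exp (2/log x)`, but there are at most `2 log x / log log x` of
them, because their product divides `q₁ - q₂ ≠ 0` and `|q₁ - q₂| ≤ x²`.
-/

open Finset Real Filter

/-- The probability that a uniform class mod `s` avoids both `q₁` and `q₂`, where
`d = q₁ - q₂`. -/
noncomputable def pairAvoidProb (s : ℕ) (d : ℤ) : ℝ :=
  ((s - if (s : ℤ) ∣ d then 1 else 2 : ℕ) : ℝ) / s

lemma natCast_dvd_sub_iff_eq_emod {s a : ℕ} (ha : a < s) (q : ℤ) :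
    (s : ℤ) ∣ q - a ↔ (a : ℤ) = q % s := by
  rw [← Int.modEq_iff_dvd, Int.ModEq, Int.emod_eq_of_lt (by positivity) (by exact_mod_cast ha)]

lemma card_filter_range_avoid (s : ℕ) (q₁ q₂ : ℤ) :
    #((range s).filter (fun a : ℕ => ¬ (s : ℤ) ∣ q₁ - a ∧ ¬ (s : ℤ) ∣ q₂ - a))
      = s - if (s : ℤ) ∣ q₁ - q₂ then 1 else 2 := by
  rcases s.eq_zero_or_pos with rfl | hs
  · simp
  have hs' : (0 : ℤ) < s := by exact_mod_cast hs
  set r : ℤ → ℕ := fun q => (q % s).toNat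
  have hr_cast : ∀ q, (r q : ℤ) = q % s := fun q => Int.toNat_of_nonneg (Int.emod_nonneg q hs'.ne')
  have hr_lt : ∀ q, r q < s := fun q => by
    have := Int.emod_lt_of_pos q hs'
    have := hr_cast q
    omega
  have hdvd : ∀ a < s, ∀ q, (s : ℤ) ∣ q - a ↔ a = r q := fun a ha q => by
    rw [natCast_dvd_sub_iff_eq_emod ha, ← hr_cast]
    exact Nat.cast_inj
  have hr_eq : r q₁ = r q₂ ↔ (s : ℤ) ∣ q₁ - q₂ := by
    rw [← Nat.cast_inj (R := ℤ), hr_cast, hr_cast, ← Int.ModEq, Int.modEq_iff_dvd, ← dvd_neg,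
      neg_sub]
  have hfilter : (range s).filter (fun a : ℕ => ¬ (s : ℤ) ∣ q₁ - a ∧ ¬ (s : ℤ) ∣ q₂ - a)
      = range s \ {r q₁, r q₂} := by
    ext a
    simp only [mem_filter, Finset.mem_sdiff, mem_range, mem_insert, mem_singleton, not_or]
    constructor
    · rintro ⟨ha, h₁, h₂⟩
      exact ⟨ha, fun h => h₁ ((hdvd a ha q₁).2 h), fun h => h₂ ((hdvd a ha q₂).2 h)⟩
    · rintro ⟨ha, h₁, h₂⟩
      exact ⟨ha, fun h => h₁ ((hdvd a ha q₁).1 h), fun h => h₂ ((hdvd a ha q₂).1 h)⟩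
  have hsub : {r q₁, r q₂} ⊆ range s := by
    simp [insert_subset_iff, hr_lt]
  rw [hfilter, card_sdiff_of_subset hsub, card_range]
  split_ifs with h
  · simp [hr_eq.2 h]
  · rw [card_pair (mt hr_eq.1 h)]

lemma avoid_ratio_eq_prod (S : Finset ℕ) (q₁ q₂ : ℤ) :
    (#((S.pi fun s => range s).filter (fun a =>
          ∀ s (hs : s ∈ S), ¬ ((s : ℤ) ∣ (q₁ - (a s hs : ℤ))) ∧
            ¬ ((s : ℤ) ∣ (q₂ - (a s hs : ℤ))))) : ℝ) / (#(S.pi fun s => range s) : ℝ)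
      = ∏ s ∈ S, pairAvoidProb s (q₁ - q₂) := by
  have hpi : (S.pi fun s => range s).filter (fun a =>
        ∀ s (hs : s ∈ S), ¬ ((s : ℤ) ∣ (q₁ - (a s hs : ℤ))) ∧
          ¬ ((s : ℤ) ∣ (q₂ - (a s hs : ℤ))))
      = S.pi fun s => (range s).filter (fun a : ℕ => ¬ (s : ℤ) ∣ q₁ - a ∧ ¬ (s : ℤ) ∣ q₂ - a) := by
    ext a
    simp only [mem_filter, Finset.mem_pi, forall_and]
  simp only [hpi, card_pi, card_filter_range_avoid, card_range, Nat.cast_prod,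
    ← prod_div_distrib, pairAvoidProb]

lemma pairAvoidProb_nonneg (s : ℕ) (d : ℤ) : 0 ≤ pairAvoidProb s d := by
  unfold pairAvoidProb
  positivity

lemma sq_one_sub_inv_mul_le_pairAvoidProb {s : ℕ} (hs : 4 ≤ s) (d : ℤ) :
    (1 - 1 / (s : ℝ)) ^ 2 * (1 - 2 / (s : ℝ) ^ 2) ≤ pairAvoidProb s d := by
  have hs' : (4 : ℝ) ≤ s := by exact_mod_cast hs
  calc (1 - 1 / (s : ℝ)) ^ 2 * (1 - 2 / (s : ℝ) ^ 2) ≤ ((s : ℝ) - 2) / s := by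
        have : (0 : ℝ) < s := by linarith
        rw [le_div_iff₀ this]
        field_simp
        nlinarith
    _ ≤ pairAvoidProb s d := by
        unfold pairAvoidProb
        gcongr
        split_ifs <;> rw [Nat.cast_sub (by omega)] <;> norm_num; linarith

lemma pairAvoidProb_le {s : ℕ} (hs : 2 ≤ s) (d : ℤ) :
    pairAvoidProb s d ≤ (1 - 1 / (s : ℝ)) ^ 2 * if (s : ℤ) ∣ d then 1 + 2 / (s : ℝ) else 1 := by
  have hs' : (2 : ℝ) ≤ s := by exact_mod_cast hs
  have hs0 : (0 : ℝ) < s := by linarith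
  unfold pairAvoidProb
  split_ifs <;> rw [Nat.cast_sub (by omega), div_le_iff₀ hs0] <;> field_simp <;> push_cast <;>
    nlinarith

lemma one_sub_sum_le_prod_one_sub {ι : Type*} (s : Finset ι) (f : ι → ℝ)
    (h₀ : ∀ i ∈ s, 0 ≤ f i) (h₁ : ∀ i ∈ s, f i ≤ 1) :
    1 - ∑ i ∈ s, f i ≤ ∏ i ∈ s, (1 - f i) := by
  induction s using Finset.cons_induction with
  | empty => simp
  | cons j s hj ih =>
    rw [sum_cons, prod_cons]
    have hfj₀ := h₀ j (mem_cons_self j s)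
    have hfj₁ := h₁ j (mem_cons_self j s)
    have hsum : 0 ≤ ∑ i ∈ s, f i := sum_nonneg fun i hi => h₀ i (mem_cons_of_mem hi)
    have ih' := ih (fun i hi => h₀ i (mem_cons_of_mem hi)) (fun i hi => h₁ i (mem_cons_of_mem hi))
    nlinarith [mul_le_mul_of_nonneg_left ih' (sub_nonneg.2 hfj₁)]

lemma sum_inv_sq_le_of_forall_lt (S : Finset ℕ) {L : ℝ} (hL : 0 < L) (hS : ∀ s ∈ S, L < s) :
    ∑ s ∈ S, ((s : ℝ) ^ 2)⁻¹ ≤ 2 / L := by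
  calc ∑ s ∈ S, ((s : ℝ) ^ 2)⁻¹ ≤ ∑ i ∈ Ioo ⌊L⌋₊ (S.sup id + 1), ((i : ℝ) ^ 2)⁻¹ := by
        refine sum_le_sum_of_subset_of_nonneg (fun s hs => ?_) fun _ _ _ => by positivity
        rw [mem_Ioo, Nat.floor_lt hL.le, Nat.lt_succ_iff]
        exact ⟨hS s hs, le_sup (f := id) hs⟩
    _ ≤ 2 / (⌊L⌋₊ + 1) := sum_Ioo_inv_sq_le _ _
    _ ≤ 2 / L := div_le_div_of_nonneg_left zero_le_two hL (Nat.lt_floor_add_one L).le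

lemma pow_card_le_of_forall_prime_dvd {D : Finset ℕ} {n : ℕ} (hn : n ≠ 0)
    (hD : ∀ p ∈ D, p.Prime ∧ p ∣ n) {L : ℝ} (hL : 0 ≤ L) (hLD : ∀ p ∈ D, L ≤ p) :
    L ^ #D ≤ n := by
  have hdvd : ∏ p ∈ D, p ∣ n :=
    prod_primes_dvd n (fun p hp => (hD p hp).1.prime) fun p hp => (hD p hp).2
  calc L ^ #D = ∏ _p ∈ D, L := (prod_const L).symm
    _ ≤ ∏ p ∈ D, (p : ℝ) := prod_le_prod (fun _ _ => hL) hLD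
    _ = ((∏ p ∈ D, p : ℕ) : ℝ) := by push_cast; rfl
    _ ≤ n := by exact_mod_cast Nat.le_of_dvd (Nat.pos_of_ne_zero hn) hdvd

lemma sq_prod_one_sub_inv_mul_le_prod_pairAvoidProb (S : Finset ℕ) {L : ℝ} (hL : 4 ≤ L)
    (hS : ∀ s ∈ S, L < s) (d : ℤ) :
    (∏ s ∈ S, (1 - 1 / (s : ℝ))) ^ 2 * (1 - 4 / L) ≤ ∏ s ∈ S, pairAvoidProb s d := by
  have hs4 : ∀ s ∈ S, (4 : ℝ) ≤ s := fun s hs => hL.trans (hS s hs).le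
  have hf₁ : ∀ s ∈ S, 2 / (s : ℝ) ^ 2 ≤ 1 := fun s hs => by
    rw [div_le_one (by nlinarith [hs4 s hs])]
    nlinarith [hs4 s hs]
  have hsum : ∑ s ∈ S, 2 / (s : ℝ) ^ 2 ≤ 4 / L := by
    simp_rw [div_eq_mul_inv (2 : ℝ), ← mul_sum]
    calc 2 * ∑ s ∈ S, ((s : ℝ) ^ 2)⁻¹ ≤ 2 * (2 / L) := by
          gcongr
          exact sum_inv_sq_le_of_forall_lt S (by linarith) hS
      _ = 4 / L := by ring
  calc (∏ s ∈ S, (1 - 1 / (s : ℝ))) ^ 2 * (1 - 4 / L)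
      ≤ (∏ s ∈ S, (1 - 1 / (s : ℝ))) ^ 2 * (1 - ∑ s ∈ S, 2 / (s : ℝ) ^ 2) := by gcongr
    _ ≤ (∏ s ∈ S, (1 - 1 / (s : ℝ))) ^ 2 * ∏ s ∈ S, (1 - 2 / (s : ℝ) ^ 2) := by
        gcongr
        exact one_sub_sum_le_prod_one_sub S _ (fun _ _ => by positivity) hf₁
    _ = ∏ s ∈ S, (1 - 1 / (s : ℝ)) ^ 2 * (1 - 2 / (s : ℝ) ^ 2) := by
        rw [← prod_pow, prod_mul_distrib]
    _ ≤ ∏ s ∈ S, pairAvoidProb s d :=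
        prod_le_prod (fun s hs => mul_nonneg (sq_nonneg _) (sub_nonneg.2 (hf₁ s hs)))
          fun s hs => sq_one_sub_inv_mul_le_pairAvoidProb (by exact_mod_cast hs4 s hs) d

lemma prod_pairAvoidProb_le_sq_prod_mul_exp (S : Finset ℕ) {L : ℝ} (hL : 1 < L)
    (hS : ∀ s ∈ S, s.Prime ∧ L < s) {d : ℤ} (hd₀ : d ≠ 0)
    (hd : ((|d| : ℤ) : ℝ) ≤ exp (2 * L)) :
    ∏ s ∈ S, pairAvoidProb s d ≤ (∏ s ∈ S, (1 - 1 / (s : ℝ))) ^ 2 * exp (4 / log L) := by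
  set D := S.filter fun s : ℕ => (s : ℤ) ∣ d
  have hlogL : 0 < log L := log_pos hL
  have hcard : #D * log L ≤ 2 * L := by
    have hpow : L ^ #D ≤ d.natAbs :=
      pow_card_le_of_forall_prime_dvd (Int.natAbs_ne_zero.2 hd₀)
        (fun p hp => ⟨(hS p (mem_filter.1 hp).1).1, Int.natCast_dvd.1 (mem_filter.1 hp).2⟩)
        (by linarith) fun p hp => (hS p (mem_filter.1 hp).1).2.le
    have := log_le_log (by positivity) (hpow.trans ((Nat.cast_natAbs d).trans_le hd))
    rwa [log_pow, log_exp] at this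
  calc ∏ s ∈ S, pairAvoidProb s d
      ≤ ∏ s ∈ S, (1 - 1 / (s : ℝ)) ^ 2 * if (s : ℤ) ∣ d then 1 + 2 / (s : ℝ) else 1 :=
        prod_le_prod (fun s _ => pairAvoidProb_nonneg s d)
          fun s hs => pairAvoidProb_le (hS s hs).1.two_le d
    _ = (∏ s ∈ S, (1 - 1 / (s : ℝ))) ^ 2 * ∏ s ∈ D, (1 + 2 / (s : ℝ)) := by
        rw [prod_mul_distrib, prod_pow, prod_filter]
    _ ≤ (∏ s ∈ S, (1 - 1 / (s : ℝ))) ^ 2 * exp (∑ s ∈ D, 2 / (s : ℝ)) := by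
        gcongr
        exact prod_one_add_le_exp_sum D fun s => by positivity
    _ ≤ (∏ s ∈ S, (1 - 1 / (s : ℝ))) ^ 2 * exp (#D * (2 / L)) := by
        gcongr
        rw [← nsmul_eq_mul]
        refine sum_le_card_nsmul D _ _ fun s hs => ?_
        exact div_le_div_of_nonneg_left zero_le_two (by linarith) (hS s (mem_filter.1 hs).1).2.le
    _ ≤ (∏ s ∈ S, (1 - 1 / (s : ℝ))) ^ 2 * exp (4 / log L) := by
        gcongr
        rw [le_div_iff₀ hlogL]
        field_simp
        nlinarith

lemma tendsto_exp_const_div_log_atTop (c : ℝ) :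
    Tendsto (fun L => exp (c / log L)) atTop (nhds 1) := by
  simpa [Function.comp_def] using
    (continuous_exp.tendsto 0).comp (tendsto_const_nhds.div_atTop tendsto_log_atTop)

/-- For `S` a finite set of primes each exceeding `log x`, uniform independent random
classes `a_s mod s`, and distinct integers `q₁ ≠ q₂` with `|q₁ - q₂| ≤ x log x`, the
probability that both `q₁` and `q₂` avoid all classes `a_s mod s` is
`(1+o(1)) γ²` as `x → ∞`, where `γ = ∏_{s ∈ S}(1 - 1/s)`. -/
theorem stmt_5 :
    ∀ ε : ℝ, 0 < ε → ∃ x0 : ℝ, ∀ x : ℝ, x0 ≤ x →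
      ∀ S : Finset ℕ, (∀ s ∈ S, s.Prime ∧ Real.log x < s) →
      ∀ q1 q2 : ℤ, q1 ≠ q2 → ((|q1 - q2| : ℤ) : ℝ) ≤ x * Real.log x →
        |(((S.pi fun s => Finset.range s).filter (fun a =>
              ∀ s (hs : s ∈ S), ¬ ((s : ℤ) ∣ (q1 - (a s hs : ℤ))) ∧
                ¬ ((s : ℤ) ∣ (q2 - (a s hs : ℤ))))).card : ℝ) /
            ((S.pi fun s => Finset.range s).card : ℝ) -
          (∏ s ∈ S, (1 - 1 / (s : ℝ))) ^ 2|
        ≤ ε * (∏ s ∈ S, (1 - 1 / (s : ℝ))) ^ 2 := by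
  intro ε hε
  obtain ⟨L₀, hL₀⟩ := ((eventually_ge_atTop 4).and ((eventually_ge_atTop (4 / ε)).and
    ((tendsto_exp_const_div_log_atTop 4).eventually_le_const (by linarith : (1 : ℝ) < 1 + ε)))
    ).exists_forall_of_atTop
  refine ⟨exp L₀, fun x hx S hS q1 q2 hne hq => ?_⟩
  have hx₀ : 0 < x := (exp_pos L₀).trans_le hx
  obtain ⟨hL4, hLε, hLexp⟩ := hL₀ (log x) ((le_log_iff_exp_le hx₀).2 hx)
  have hd : ((|q1 - q2| : ℤ) : ℝ) ≤ exp (2 * log x) := by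
    rw [two_mul, exp_add, exp_log hx₀]
    exact hq.trans (mul_le_mul_of_nonneg_left (log_le_self hx₀.le) hx₀.le)
  have hlower := sq_prod_one_sub_inv_mul_le_prod_pairAvoidProb S hL4 (fun s hs => (hS s hs).2)
    (q1 - q2)
  have hupper := prod_pairAvoidProb_le_sq_prod_mul_exp S (by linarith) hS (sub_ne_zero.2 hne) hd
  have h4ε : 4 / log x ≤ ε := by
    rw [div_le_iff₀ hε] at hLε
    rw [div_le_iff₀ (by linarith)]
    linarith
  rw [avoid_ratio_eq_prod, abs_sub_le_iff]
  constructor <;> nlinarith [sq_nonneg (∏ s ∈ S, (1 - 1 / (s : ℝ)))]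
end

section
/- Fix r ≥ 1 and distinct primes p_1, p_2, each in (x/2, x]. Let S be a set of primes in (log x, z] with z ≤ x, and choose a_s uniformly and independently for s ∈ S. For an integer q and 0 ≤ i ≤ r-1, the probability that all integers q + j·r!·p_k for j ∈ {-i, 1-i, ..., r-1-i} and k ∈ {1,2} avoid every class a_s mod s equals (1+o(1)) ∏_{s∈S}(1 - (2r-1)/s), as x → ∞. -/
/-!
For each `s ∈ S` the class `a_s` must avoid the residues modulo `s` of the integers
`q + j r! p_k`, so the probability factors as `∏ s, (1 - ν(s)/s)` with `ν(s)` the number of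
these residues. Always `ν(s) ≤ 2r - 1`, because `q` lies in both progressions, with equality
unless `s ∣ r!` or `s` divides some `u p₁ - v p₂` with `|u|, |v| ≤ r` not both zero. As
`s > log x > r!`, only the prime factors of the nonzero product `M` of these forms are
exceptional; since `|M| ≤ (2rx)^((2r+1)²)` there are `O(log x / log log x)` of them, each costing
at most a factor `(1 - (2r-1)/log x)⁻¹`, and together they cost only `1 + o(1)`.
-/

open Finset

noncomputable def residueCount (s : ℕ) (T : Finset ℤ) : ℕ :=
  #(T.image (Int.cast : ℤ → ZMod s))

theorem card_filter_pi_forall {ι α : Type*} [DecidableEq ι] (S : Finset ι) (t : ι → Finset α)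
    (P : ι → α → Prop) [∀ s, DecidablePred (P s)] :
    #((S.pi t).filter fun a => ∀ s (hs : s ∈ S), P s (a s hs)) =
      ∏ s ∈ S, #{b ∈ t s | P s b} := by
  rw [← card_pi]
  congr 1
  ext a
  simp only [mem_filter, mem_pi, forall_and]

theorem card_filter_range_forall_not_dvd_sub (s : ℕ) [NeZero s] (T : Finset ℤ) :
    #{b ∈ range s | ∀ t ∈ T, ¬ (s : ℤ) ∣ t - (b : ℕ)} = s - residueCount s T := by
  have hdvd (t : ℤ) (b : ℕ) : (s : ℤ) ∣ t - b ↔ (t : ZMod s) = b := by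
    rw [← ZMod.intCast_eq_intCast_iff_dvd_sub, Int.cast_natCast, eq_comm]
  have hcompl : #((univ : Finset (ZMod s)) \ T.image Int.cast) = s - residueCount s T := by
    rw [residueCount, card_sdiff_of_subset (subset_univ _), card_univ, ZMod.card]
  rw [← hcompl]
  refine card_nbij' (fun b => (b : ZMod s)) ZMod.val ?_ ?_ ?_ ?_
  · intro b hb
    simp_all
  · intro x _
    simp_all [ZMod.val_lt]
  · intro b hb
    exact ZMod.val_cast_of_lt (mem_range.1 (mem_filter.1 hb).1)
  · intro x _
    exact ZMod.natCast_zmod_val x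

theorem residueCount_le (s : ℕ) [NeZero s] (T : Finset ℤ) : residueCount s T ≤ s :=
  (card_le_univ _).trans (ZMod.card s).le

theorem card_filter_pi_range_div_card_pi (S : Finset ℕ) (hS : ∀ s ∈ S, 0 < s) (T : Finset ℤ) :
    (#{a ∈ S.pi fun s => range s | ∀ s (hs : s ∈ S), ∀ t ∈ T, ¬ (s : ℤ) ∣ t - (a s hs : ℕ)} :
        ℝ) / #(S.pi fun s => range s) =
      ∏ s ∈ S, (1 - (residueCount s T : ℝ) / s) := by
  rw [card_filter_pi_forall S _ fun s b => ∀ t ∈ T, ¬ (s : ℤ) ∣ t - (b : ℕ), card_pi,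
    Nat.cast_prod, Nat.cast_prod, ← prod_div_distrib]
  refine prod_congr rfl fun s hs => ?_
  have : NeZero s := ⟨(hS s hs).ne'⟩
  rw [card_filter_range_forall_not_dvd_sub, card_range,
    Nat.cast_sub (residueCount_le s T), sub_div, div_self (NeZero.ne _)]

def twoProgressions (q F a b : ℤ) (J : Finset ℤ) : Finset ℤ :=
  J.image (fun j => q + j * F * a) ∪ J.image (fun j => q + j * F * b)

def NoSmallRelation {R : Type*} [Ring R] (D : ℕ) (a b : R) : Prop :=
  ∀ u v : ℤ, |u| ≤ D → |v| ≤ D → (u : R) * a = v * b → u = 0 ∧ v = 0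

section twoProgressions

variable (q F a b : ℤ) (J : Finset ℤ)

theorem forall_mem_twoProgressions_iff (P : ℤ → Prop) :
    (∀ t ∈ twoProgressions q F a b J, P t) ↔
      ∀ j ∈ J, P (q + j * F * a) ∧ P (q + j * F * b) := by
  simp only [twoProgressions, forall_mem_union, forall_mem_image, ← forall_and]

theorem card_twoProgressions_le (h0 : 0 ∈ J) : #(twoProgressions q F a b J) ≤ 2 * #J - 1 := by
  have hq : q ∈ J.image (fun j => q + j * F * a) ∩ J.image (fun j => q + j * F * b) :=
    mem_inter.2 ⟨mem_image.2 ⟨0, h0, by ring⟩, mem_image.2 ⟨0, h0, by ring⟩⟩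
  have := card_union_add_card_inter (J.image fun j => q + j * F * a)
    (J.image fun j => q + j * F * b)
  have := card_pos.2 ⟨q, hq⟩
  have := card_image_le (s := J) (f := fun j => q + j * F * a)
  have := card_image_le (s := J) (f := fun j => q + j * F * b)
  unfold twoProgressions
  omega

theorem card_image_twoProgressions_ge {R : Type*} [CommRing R] [IsDomain R] [DecidableEq R]
    {D : ℕ} (hF : (F : R) ≠ 0) (hab : NoSmallRelation D (a : R) b) (h0 : 0 ∈ J)
    (hJ : ∀ j ∈ J, ∀ j' ∈ J, |j - j'| ≤ D) :
    2 * #J - 1 ≤ #((twoProgressions q F a b J).image (Int.cast : ℤ → R)) := by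
  set f : ℤ → R := fun j => q + j * F * a
  set g : ℤ → R := fun j => q + j * F * b
  have himage :
      (twoProgressions q F a b J).image (Int.cast : ℤ → R) = J.image f ∪ J.image g := by
    simp only [twoProgressions, image_union, image_image]
    congr 1 <;> ext <;> simp [f, g]
  have hcancel (j j' : ℤ) {c d : R} (h : (q : R) + j * F * c = q + j' * F * d) :
      (j : R) * c = j' * d :=
    mul_right_cancel₀ hF (by linear_combination h)
  have hJD (j) (hj : j ∈ J) : |j| ≤ D := by simpa using hJ j hj 0 h0
  have hf : Set.InjOn f J := fun j hj j' hj' h => by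
    have := hab (j - j') 0 (hJ j hj j' hj') (by simp)
      (by push_cast; linear_combination hcancel j j' h)
    omega
  have hg : Set.InjOn g J := fun j hj j' hj' h => by
    have := hab 0 (j - j') (by simp) (hJ j hj j' hj')
      (by push_cast; linear_combination -hcancel j j' h)
    omega
  have hfg : #(J.image f ∩ J.image g) ≤ 1 := by
    refine card_le_one.2 fun x hx y hy => ?_
    suffices ∀ x ∈ J.image f ∩ J.image g, x = q by rw [this x hx, this y hy]
    intro x hx
    obtain ⟨⟨j, hj, rfl⟩, ⟨j', hj', hj'j⟩⟩ := And.imp mem_image.1 mem_image.1 (mem_inter.1 hx)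
    obtain ⟨rfl, -⟩ := hab j j' (hJD j hj) (hJD j' hj') (hcancel j' j hj'j).symm
    simp [f]
  have := card_union_add_card_inter (J.image f) (J.image g)
  rw [card_image_of_injOn hf, card_image_of_injOn hg] at this
  rw [himage]
  omega

end twoProgressions

section smallRelations

variable {D : ℕ}

theorem noSmallRelation_of_prime {p₁ p₂ : ℕ} (hp₁ : p₁.Prime) (hp₂ : p₂.Prime) (hne : p₁ ≠ p₂)
    (hD : D < p₁) : NoSmallRelation D (p₁ : ℤ) p₂ := by
  intro u v hu hv h
  simp only [Int.cast_id] at h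
  have hv0 : v = 0 := by
    have hdvd : (p₁ : ℤ) ∣ v * p₂ := ⟨u, by rw [← h]; ring⟩
    rcases (Nat.prime_iff_prime_int.1 hp₁).dvd_mul.1 hdvd with h | h
    · by_contra hv0
      have := Int.le_of_dvd (abs_pos.2 hv0) ((dvd_abs _ _).2 h)
      omega
    · exact absurd ((Nat.prime_dvd_prime_iff_eq hp₁ hp₂).1 (Int.natCast_dvd_natCast.1 h)) hne
  subst hv0
  simpa [hp₁.ne_zero] using h

variable (D) in
noncomputable def smallBox : Finset (ℤ × ℤ) :=
  (Icc (-(D : ℤ)) D ×ˢ Icc (-(D : ℤ)) D).erase 0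

theorem mem_smallBox {u v : ℤ} :
    (u, v) ∈ smallBox D ↔ |u| ≤ D ∧ |v| ≤ D ∧ ¬(u = 0 ∧ v = 0) := by
  simp only [smallBox, mem_erase, mem_product, mem_Icc, ne_eq, Prod.ext_iff, Prod.fst_zero,
    Prod.snd_zero, abs_le]
  tauto

theorem card_smallBox_le : #(smallBox D) ≤ (2 * D + 1) ^ 2 := by
  refine card_erase_le.trans (le_of_eq ?_)
  rw [card_product, Int.card_Icc, sq]
  congr 1 <;> omega

/-- A prime `s` divides this product exactly when `a` and `b` satisfy a nontrivial small
relation modulo `s`. -/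
noncomputable def smallRelationProd (D : ℕ) (a b : ℤ) : ℤ :=
  ∏ uv ∈ smallBox D, (uv.1 * a - uv.2 * b)

theorem smallRelationProd_ne_zero {a b : ℤ} (hab : NoSmallRelation D a b) :
    smallRelationProd D a b ≠ 0 := by
  refine prod_ne_zero_iff.2 fun ⟨u, v⟩ huv h => ?_
  obtain ⟨hu, hv, hne⟩ := mem_smallBox.1 huv
  exact hne (hab u v hu hv (by simpa [sub_eq_zero] using h))

theorem noSmallRelation_zmod {s : ℕ} {a b : ℤ} (hs : ¬ (s : ℤ) ∣ smallRelationProd D a b) :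
    NoSmallRelation D (a : ZMod s) b := by
  intro u v hu hv h
  by_contra hne
  refine hs ((ZMod.intCast_zmod_eq_zero_iff_dvd _ s).1 ?_ |>.trans
    (dvd_prod_of_mem _ (mem_smallBox.2 ⟨hu, hv, hne⟩)))
  push_cast
  rw [h, sub_self]

theorem abs_smallRelationProd_le {a b : ℤ} {X : ℝ} (ha : |(a : ℝ)| ≤ X) (hb : |(b : ℝ)| ≤ X)
    (hX : 1 ≤ 2 * D * X) :
    |(smallRelationProd D a b : ℝ)| ≤ (2 * D * X) ^ (2 * D + 1) ^ 2 := by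
  rw [smallRelationProd, Int.cast_prod, abs_prod]
  refine (prod_le_prod (fun _ _ => abs_nonneg _) fun uv huv => ?_).trans
    ((prod_const _).trans_le (pow_le_pow_right₀ hX card_smallBox_le))
  obtain ⟨u, v⟩ := uv
  obtain ⟨hu, hv, -⟩ := mem_smallBox.1 huv
  have hu' : |(u : ℝ)| ≤ D := by exact_mod_cast hu
  have hv' : |(v : ℝ)| ≤ D := by exact_mod_cast hv
  push_cast
  calc |(u : ℝ) * a - v * b| ≤ |(u : ℝ)| * |(a : ℝ)| + |(v : ℝ)| * |(b : ℝ)| := by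
        rw [← abs_mul, ← abs_mul]; exact abs_sub _ _
    _ ≤ D * X + D * X := by gcongr
    _ = 2 * D * X := by ring

end smallRelations

theorem pow_card_le_abs_of_prime_dvd {P : Finset ℕ} {M : ℤ} {L : ℝ} (hM : M ≠ 0) (hL : 0 ≤ L)
    (hP : ∀ s ∈ P, s.Prime ∧ L ≤ s ∧ (s : ℤ) ∣ M) : L ^ #P ≤ |(M : ℝ)| := by
  have hdvd : ∏ s ∈ P, s ∣ M.natAbs :=
    prod_primes_dvd _ (fun s hs => (hP s hs).1.prime) fun s hs => Int.natCast_dvd.1 (hP s hs).2.2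
  calc L ^ #P = ∏ _s ∈ P, L := (prod_const L).symm
    _ ≤ ∏ s ∈ P, (s : ℝ) := prod_le_prod (fun _ _ => hL) fun s hs => (hP s hs).2.1
    _ ≤ M.natAbs := by
        rw [← Nat.cast_prod]; exact Nat.cast_le.2 (Nat.le_of_dvd (Int.natAbs_pos.2 hM) hdvd)
    _ = |(M : ℝ)| := by rw [Nat.cast_natAbs, Int.cast_abs]

theorem prod_le_prod_mul_inv_pow_card_filter {ι : Type*} (S : Finset ι) (p : ι → Prop)
    [DecidablePred p] {f g : ι → ℝ} {c : ℝ} (hc : 0 < c) (hg : ∀ s ∈ S, c ≤ g s)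
    (hf0 : ∀ s ∈ S, 0 ≤ f s) (hf1 : ∀ s ∈ S, f s ≤ 1) (hfg : ∀ s ∈ S, ¬ p s → f s ≤ g s) :
    ∏ s ∈ S, f s ≤ (∏ s ∈ S, g s) * c⁻¹ ^ #{s ∈ S | p s} := by
  have hfg' (s) (hs : s ∈ S) : f s ≤ g s * if p s then c⁻¹ else 1 := by
    split_ifs with hp
    · have hgs := hg s hs
      calc f s ≤ 1 := hf1 s hs
        _ = g s * (g s)⁻¹ := (mul_inv_cancel₀ (by linarith)).symm
        _ ≤ g s * c⁻¹ := by gcongr; linarith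
    · rw [mul_one]; exact hfg s hs hp
  calc ∏ s ∈ S, f s ≤ ∏ s ∈ S, g s * if p s then c⁻¹ else 1 := prod_le_prod hf0 hfg'
    _ = (∏ s ∈ S, g s) * c⁻¹ ^ #{s ∈ S | p s} := by
        rw [prod_mul_distrib, prod_ite, prod_const, prod_const_one, mul_one]

theorem inv_one_sub_le_exp_two_mul {t : ℝ} (ht0 : 0 ≤ t) (ht : t ≤ 1 / 2) :
    (1 - t)⁻¹ ≤ Real.exp (2 * t) := by
  calc (1 - t)⁻¹ ≤ 1 + 2 * t := by
        rw [inv_le_iff_one_le_mul₀ (by linarith)]; nlinarith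
    _ ≤ Real.exp (2 * t) := by linarith [Real.add_one_le_exp (2 * t)]

theorem eventually_inv_one_sub_div_log_pow_le {m C ε : ℝ} (K : ℕ) (hm : 0 ≤ m) (hC : 0 < C)
    (hε : 0 < ε) :
    ∀ᶠ x in Filter.atTop, ∀ n : ℕ, Real.log x ^ n ≤ (C * x) ^ K →
      (1 - m / Real.log x)⁻¹ ^ n ≤ 1 + ε := by
  have hlog1ε : 0 < Real.log (1 + ε) := Real.log_pos (by linarith)
  filter_upwards [Filter.eventually_ge_atTop C, Filter.eventually_ge_atTop 1,
    Real.tendsto_log_atTop.eventually_ge_atTop (2 * m + 1),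
    (Real.tendsto_log_atTop.comp Real.tendsto_log_atTop).eventually_ge_atTop
      (4 * m * K / Real.log (1 + ε) + 1)] with x hxC hx1 hL hlogL n hn
  rw [Function.comp_apply] at hlogL
  set L := Real.log x
  have hL0 : 0 < L := by linarith
  have hK : 0 ≤ 4 * m * K / Real.log (1 + ε) := by positivity
  have hlogL0 : 0 < Real.log L := by linarith
  have hn' : n * Real.log L ≤ 2 * K * L := by
    have := Real.log_le_log (by positivity) hn
    rw [Real.log_pow, Real.log_pow, Real.log_mul hC.ne' (by linarith)] at this
    have : Real.log C ≤ L := Real.log_le_log hC hxC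
    nlinarith
  calc (1 - m / L)⁻¹ ^ n ≤ Real.exp (2 * (m / L)) ^ n := by
        gcongr
        · exact inv_nonneg.2 (sub_nonneg.2 ((div_le_one hL0).2 (by linarith)))
        · exact inv_one_sub_le_exp_two_mul (by positivity) (by rw [div_le_iff₀ hL0]; linarith)
    _ = Real.exp (2 * m * (n / L)) := by rw [← Real.exp_nat_mul]; ring_nf
    _ ≤ Real.exp (Real.log (1 + ε)) := by
        refine Real.exp_le_exp.2 ?_
        have h1 : n / L ≤ 2 * K / Real.log L := by
          rw [div_le_div_iff₀ hL0 hlogL0]; linarith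
        have h2 : 4 * m * K ≤ Real.log (1 + ε) * Real.log L := by
          rw [← div_le_iff₀' hlog1ε]; linarith
        calc 2 * m * (n / L) ≤ 2 * m * (2 * K / Real.log L) := by gcongr
          _ = 4 * m * K / Real.log L := by ring
          _ ≤ Real.log (1 + ε) := by rw [div_le_iff₀ hlogL0]; linarith
    _ = 1 + ε := Real.exp_log (by linarith)

theorem abs_prod_one_sub_div_sub_prod_le {S : Finset ℕ} {e : ℕ → ℕ} {m : ℕ} {L ε : ℝ}
    (p : ℕ → Prop) [DecidablePred p] (hmL : m < L) (hS : ∀ s ∈ S, L < s) (he : ∀ s ∈ S, e s ≤ m)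
    (hgood : ∀ s ∈ S, ¬ p s → m ≤ e s) (hbad : (1 - m / L)⁻¹ ^ #{s ∈ S | p s} ≤ 1 + ε) :
    |∏ s ∈ S, (1 - (e s : ℝ) / s) - ∏ s ∈ S, (1 - (m : ℝ) / s)| ≤
      ε * ∏ s ∈ S, (1 - (m : ℝ) / s) := by
  have hL : 0 < L := lt_of_le_of_lt m.cast_nonneg hmL
  have hdiv {s k k' : ℕ} (hk : k ≤ k') : 1 - (k' : ℝ) / s ≤ 1 - k / s := by gcongr
  have hle_one (s) (hs : s ∈ S) {k : ℕ} (hk : k ≤ m) : 0 ≤ 1 - (k : ℝ) / s := by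
    have : (k : ℝ) ≤ m := by exact_mod_cast hk
    exact sub_nonneg.2 ((div_le_one (hL.trans (hS s hs))).2 (by linarith [hS s hs]))
  have hG : 0 ≤ ∏ s ∈ S, (1 - (m : ℝ) / s) := prod_nonneg fun s hs => hle_one s hs le_rfl
  have hlower : ∏ s ∈ S, (1 - (m : ℝ) / s) ≤ ∏ s ∈ S, (1 - (e s : ℝ) / s) :=
    prod_le_prod (fun s hs => hle_one s hs le_rfl) fun s hs => hdiv (he s hs)
  have hupper := prod_le_prod_mul_inv_pow_card_filter S p (sub_pos.2 ((div_lt_one hL).2 hmL))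
    (fun s hs => by gcongr; exact (hS s hs).le) (fun s hs => hle_one s hs (he s hs))
    (fun s hs => sub_le_self _ (by positivity)) fun s hs hp => hdiv (hgood s hs hp)
  rw [abs_of_nonneg (sub_nonneg.2 hlower)]
  nlinarith [mul_le_mul_of_nonneg_left hbad hG]

theorem residueCount_twoProgressions_le {r i : ℕ} (hi : i < r) (s : ℕ) (q a b : ℤ) :
    residueCount s (twoProgressions q r.factorial a b (Icc (-(i : ℤ)) (r - 1 - i))) ≤
      2 * r - 1 := by
  have := card_twoProgressions_le q r.factorial a b (Icc (-(i : ℤ)) (r - 1 - i))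
    (mem_Icc.2 (by omega))
  rw [Int.card_Icc, show ((r : ℤ) - 1 - i + 1 - -i).toNat = r by omega] at this
  exact card_image_le.trans this

theorem le_residueCount_twoProgressions {r i s : ℕ} [Fact s.Prime] (hi : i < r) (q : ℤ) {a b : ℤ}
    (hr : ¬ s ∣ r.factorial) (hs : ¬ (s : ℤ) ∣ smallRelationProd r a b) :
    2 * r - 1 ≤
      residueCount s (twoProgressions q r.factorial a b (Icc (-(i : ℤ)) (r - 1 - i))) := by
  have := card_image_twoProgressions_ge q r.factorial a b (Icc (-(i : ℤ)) (r - 1 - i))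
    (R := ZMod s) (by exact_mod_cast mt (ZMod.natCast_eq_zero_iff _ _).1 hr)
    (noSmallRelation_zmod hs)
    (mem_Icc.2 (by omega)) (fun j hj j' hj' => by rw [mem_Icc] at hj hj'; rw [abs_le]; omega)
  rw [Int.card_Icc, show ((r : ℤ) - 1 - i + 1 - -i).toNat = r by omega] at this
  exact this

theorem pow_card_filter_dvd_smallRelationProd_le {D : ℕ} {a b : ℤ} (hab : NoSmallRelation D a b)
    {S : Finset ℕ} {L X : ℝ} (hL : 0 ≤ L) (hS : ∀ s ∈ S, s.Prime ∧ L ≤ s) (ha : |(a : ℝ)| ≤ X)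
    (hb : |(b : ℝ)| ≤ X) (hX : 1 ≤ 2 * D * X) :
    L ^ #(S.filter fun s : ℕ => (s : ℤ) ∣ smallRelationProd D a b) ≤
      (2 * D * X) ^ (2 * D + 1) ^ 2 :=
  (pow_card_le_abs_of_prime_dvd (smallRelationProd_ne_zero hab) hL fun s hs =>
      have ⟨hs, hdvd⟩ := mem_filter.1 hs
      ⟨(hS s hs).1, (hS s hs).2, hdvd⟩).trans
    (abs_smallRelationProd_le ha hb hX)

/-- For distinct primes `p₁, p₂ ∈ (x/2, x]`, a finite set `S` of primes in
`(log x, z]` with `z ≤ x`, classes `a_s` uniform and independent, an integer `q` and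
`0 ≤ i ≤ r-1`, the probability that all integers `q + j·r!·p_k` for
`j ∈ {-i,...,r-1-i}` and `k ∈ {1,2}` avoid every class `a_s mod s` is
`(1+o(1)) ∏_{s ∈ S}(1 - (2r-1)/s)` as `x → ∞`. -/
theorem stmt_8 (r : ℕ) (hr : 1 ≤ r) :
    ∀ ε : ℝ, 0 < ε → ∃ x0 : ℝ, ∀ x : ℝ, x0 ≤ x → ∀ z : ℝ, z ≤ x →
      ∀ S : Finset ℕ, (∀ s ∈ S, s.Prime ∧ Real.log x < (s : ℝ) ∧ (s : ℝ) ≤ z) →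
      ∀ p1 p2 : ℕ, p1.Prime → p2.Prime → p1 ≠ p2 →
        x / 2 < (p1 : ℝ) → (p1 : ℝ) ≤ x → x / 2 < (p2 : ℝ) → (p2 : ℝ) ≤ x →
      ∀ q : ℤ, ∀ i : ℕ, i ≤ r - 1 →
        abs ((((S.pi fun s => Finset.range s).filter (fun a =>
              ∀ s (hs : s ∈ S), ∀ j : ℤ, -(i : ℤ) ≤ j → j ≤ (r : ℤ) - 1 - (i : ℤ) →
                ¬ ((s : ℤ) ∣ (q + j * (r.factorial : ℤ) * (p1 : ℤ) - (a s hs : ℤ))) ∧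
                ¬ ((s : ℤ) ∣ (q + j * (r.factorial : ℤ) * (p2 : ℤ) - (a s hs : ℤ))))).card : ℝ) /
            ((S.pi fun s => Finset.range s).card : ℝ) -
            ∏ s ∈ S, (1 - (2 * (r : ℝ) - 1) / (s : ℝ)))
          ≤ ε * ∏ s ∈ S, (1 - (2 * (r : ℝ) - 1) / (s : ℝ)) := by
  intro ε hε
  obtain ⟨x0, hx0⟩ := Filter.eventually_atTop.1 <|
    ((Real.tendsto_log_atTop.eventually_gt_atTop ((r.factorial : ℝ) + 2 * r)).and
      (Filter.eventually_gt_atTop (2 * r : ℝ))).and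
    (eventually_inv_one_sub_div_log_pow_le ((2 * r + 1) ^ 2) (2 * r - 1 : ℕ).cast_nonneg
      (by positivity : (0 : ℝ) < 2 * r) hε)
  refine ⟨x0, fun x hx z _ S hS p1 p2 hp1 hp2 hp12 hp1l hp1u hp2l hp2u q i hi => ?_⟩
  obtain ⟨⟨hL, hx2r⟩, hpow⟩ := hx0 x hx
  have hprob := card_filter_pi_range_div_card_pi S (fun s hs => (hS s hs).1.pos)
    (twoProgressions q r.factorial p1 p2 (Icc (-(i : ℤ)) (r - 1 - i)))
  simp only [forall_mem_twoProgressions_iff, mem_Icc, and_imp] at hprob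
  rw [hprob]
  have hm : ((2 * r - 1 : ℕ) : ℝ) = 2 * r - 1 := by
    rw [Nat.cast_sub (by omega)]; push_cast; ring
  have hi' : i < r := by omega
  have hrp : r < p1 := by exact_mod_cast (by linarith : (r : ℝ) < p1)
  have habs_le (p : ℕ) (hp : (p : ℝ) ≤ x) : |((p : ℤ) : ℝ)| ≤ x := by simpa using hp
  rw [← hm]
  refine abs_prod_one_sub_div_sub_prod_le (fun s : ℕ => (s : ℤ) ∣ smallRelationProd r p1 p2)
    (by rw [hm]; linarith) (fun s hs => (hS s hs).2.1)
    (fun s _ => residueCount_twoProgressions_le hi' s _ _ _) (fun s hs hgood => ?_) (hpow _ ?_)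
  · have := Fact.mk (hS s hs).1
    refine le_residueCount_twoProgressions hi' q (Nat.not_dvd_of_pos_of_lt r.factorial_pos ?_) hgood
    exact_mod_cast (by linarith [(hS s hs).2.1] : (r.factorial : ℝ) < s)
  · exact pow_card_filter_dvd_smallRelationProd_le (noSmallRelation_of_prime hp1 hp2 hp12 hrp)
      (by linarith) (fun s hs => ⟨(hS s hs).1, (hS s hs).2.1.le⟩) (habs_le p1 hp1u) (habs_le p2 hp2u)
      (by nlinarith)
end

section
/- Let r ≥ 1 and let ψ_1(n) = n_1, and ψ_{(j,ℓ)}(n) = n_ℓ + j·r!·n_1 + m·x for 0 ≤ j ≤ r-1 and ℓ ∈ {2,3}, a system of 2r+1 affine-linear forms on Z^3. Then the local factor β_p := E_{n ∈ (Z/pZ)^3} ∏_i Λ_{Z/pZ}(ψ_i(n)) satisfies β_p = (p/(p-1))^{2(r-1)} for primes p ≤ r, and β_p = ((p-r)p^{r-1}/(p-1)^r)^2 for primes p > r. Consequently ∏_p β_p = α_r^2. -/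
/-- The local von Mangoldt function `Λ_{Z/pZ}`. -/
noncomputable def lamZ (p : ℕ) (b : ℤ) : ℝ :=
  if (p : ℤ) ∣ b then 0 else (p : ℝ) / ((p : ℝ) - 1)

/-- The local factor `β_p` for the system of `2r+1` forms `ψ₁(n) = n₁`,
`ψ_{(j,ℓ)}(n) = n_ℓ + j·r!·n₁ + m·x` for `0 ≤ j ≤ r-1`, `ℓ ∈ {2,3}`. -/
noncomputable def betaP3 (r : ℕ) (m x : ℤ) (p : ℕ) : ℝ :=
  (∑ n1 ∈ Finset.range p, ∑ n2 ∈ Finset.range p, ∑ n3 ∈ Finset.range p,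
    lamZ p (n1 : ℤ) * ∏ j ∈ Finset.range r,
      (lamZ p ((n2 : ℤ) + (j : ℤ) * (r.factorial : ℤ) * (n1 : ℤ) + m * x) *
        lamZ p ((n3 : ℤ) + (j : ℤ) * (r.factorial : ℤ) * (n1 : ℤ) + m * x))) / (p : ℝ) ^ 3

/-- The local factor of the singular series `α_r`. -/
noncomputable def alphaFactor (r p : ℕ) : ℝ :=
  if p ≤ r then ((p : ℝ) / ((p : ℝ) - 1)) ^ (r - 1)
  else ((p : ℝ) - (r : ℝ)) * (p : ℝ) ^ (r - 1) / ((p : ℝ) - 1) ^ r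

/-!
Over `ZMod p` the sum over `(n₂, n₃)` is the square of
`S(n₁) = ∑_b ∏_j Λ(b + j·r!·n₁ + m·x)`, and the product vanishes exactly when `b` is one of the
residues `-(j·r!·n₁ + m·x)`; so `S(n₁) = (p - k)(p/(p-1))^r` with `k` the number of these residues.
Only `n₁ ≠ 0` carries weight, and then `k = 1` if `p ≤ r` (as `p ∣ r!`) and `k = r` if `p > r`.
Either way `β_p = α_p²`, and the Euler product converges since `|α_p - 1| ≤ 2r²/p²` for `p ≥ 2r`.
-/

open Finset

noncomputable def lamZMod (p : ℕ) (a : ZMod p) : ℝ :=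
  if a = 0 then 0 else (p : ℝ) / ((p : ℝ) - 1)

lemma lamZ_eq_lamZMod (p : ℕ) (b : ℤ) : lamZ p b = lamZMod p b := by
  simp only [lamZ, lamZMod, ZMod.intCast_zmod_eq_zero_iff_dvd]

lemma sum_range_natCast_zmod {M : Type*} [AddCommMonoid M] (p : ℕ) [NeZero p]
    (f : ZMod p → M) : ∑ n ∈ range p, f n = ∑ a, f a :=
  sum_nbij' (↑) ZMod.val (by simp) (by simp [ZMod.val_lt])
    (fun _ hn => ZMod.val_cast_of_lt (mem_range.1 hn)) (fun a _ => ZMod.natCast_zmod_val a)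
    (fun _ _ => rfl)

lemma betaP3_eq_sum_zmod (r : ℕ) (m x : ℤ) (p : ℕ) [NeZero p] :
    betaP3 r m x p = (∑ a : ZMod p, lamZMod p a *
      (∑ b : ZMod p, ∏ j ∈ range r, lamZMod p (b + (j * r.factorial * a + m * x))) ^ 2) /
        (p : ℝ) ^ 3 := by
  simp_rw [sq, sum_mul_sum, mul_sum, ← prod_mul_distrib, ← sum_range_natCast_zmod p]
  simp only [betaP3, lamZ_eq_lamZMod]
  push_cast
  simp only [add_assoc]

lemma sum_prod_lamZMod_add (p : ℕ) [NeZero p] {ι : Type*} (s : Finset ι) (c : ι → ZMod p) :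
    ∑ a, ∏ j ∈ s, lamZMod p (a + c j) =
      ((p : ℝ) - #(s.image fun j => -c j)) * ((p : ℝ) / ((p : ℝ) - 1)) ^ #s := by
  have hprod : ∀ a, ∏ j ∈ s, lamZMod p (a + c j) =
      if a ∈ s.image (fun j => -c j) then 0 else ((p : ℝ) / ((p : ℝ) - 1)) ^ #s := by
    intro a
    split_ifs with ha
    · obtain ⟨j, hj, rfl⟩ := mem_image.1 ha
      exact prod_eq_zero hj (by simp [lamZMod])
    · refine (prod_congr rfl fun j hj => ?_).trans (prod_const _)
      have hne : a + c j ≠ 0 := fun h ↦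
        ha (mem_image.2 ⟨j, hj, (eq_neg_of_add_eq_zero_left h).symm⟩)
      simp only [lamZMod, if_neg hne]
  simp only [hprod, sum_ite, sum_const_zero, sum_const, zero_add, nsmul_eq_mul]
  rw [filter_not, filter_mem_eq_inter, univ_inter, card_sdiff_of_subset (subset_univ _), card_univ,
    ZMod.card, Nat.cast_sub (card_le_univ _ |>.trans_eq (ZMod.card p))]

lemma card_image_neg_affine_of_le {p r : ℕ} [Fact p.Prime] (hpr : p ≤ r) (a b : ZMod p) :
    #((range r).image fun j : ℕ => -(j * r.factorial * a + b)) = 1 := by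
  have hfac : (r.factorial : ZMod p) = 0 :=
    (ZMod.natCast_eq_zero_iff _ _).2 (Nat.dvd_factorial (Fact.out : p.Prime).pos hpr)
  have hr : (range r).Nonempty := nonempty_range_iff.2 ((Fact.out : p.Prime).pos.trans_le hpr).ne'
  simp only [hfac, mul_zero, zero_mul, zero_add]
  rw [image_const hr, card_singleton]

lemma card_image_neg_affine_of_lt {p r : ℕ} [Fact p.Prime] (hrp : r < p) {a : ZMod p}
    (ha : a ≠ 0) (b : ZMod p) :
    #((range r).image fun j : ℕ => -(j * r.factorial * a + b)) = r := by
  have hfac : (r.factorial : ZMod p) ≠ 0 := by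
    rw [Ne, ZMod.natCast_eq_zero_iff, (Fact.out : p.Prime).dvd_factorial]
    omega
  rw [card_image_of_injOn, card_range]
  intro j hj k hk hjk
  have hjk' : (j : ZMod p) = k := by
    simpa [hfac, ha] using hjk
  rw [coe_range, Set.mem_Iio] at hj hk
  rw [← ZMod.val_cast_of_lt (hj.trans hrp), ← ZMod.val_cast_of_lt (hk.trans hrp), hjk']

lemma sum_lamZMod_mul_of_eq_const {p : ℕ} [Fact p.Prime] {f : ZMod p → ℝ} {C : ℝ}
    (hf : ∀ a, a ≠ 0 → f a = C) : ∑ a, lamZMod p a * f a = p * C := by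
  have hp : (p : ℝ) - 1 ≠ 0 := sub_ne_zero.2 (by exact_mod_cast (Fact.out : p.Prime).one_lt.ne')
  have hterm : ∀ a, lamZMod p a * f a = p / (p - 1) * C - if a = 0 then p / (p - 1) * C else 0 := by
    intro a
    by_cases ha : a = 0 <;> simp [lamZMod, ha, hf]
  simp only [hterm, sum_sub_distrib, sum_const, card_univ, ZMod.card, nsmul_eq_mul,
    Fintype.sum_ite_eq']
  field_simp

lemma sum_prod_lamZMod_affine {p r : ℕ} [Fact p.Prime] {a : ZMod p} (ha : a ≠ 0) (b : ZMod p) :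
    ∑ c, ∏ j ∈ range r, lamZMod p (c + (j * r.factorial * a + b)) =
      ((p : ℝ) - (if p ≤ r then 1 else r : ℕ)) * ((p : ℝ) / ((p : ℝ) - 1)) ^ r := by
  rw [sum_prod_lamZMod_add, card_range]
  split_ifs with hpr
  · rw [card_image_neg_affine_of_le hpr]
  · rw [card_image_neg_affine_of_lt (not_le.1 hpr) ha]

lemma alphaFactor_eq_mul_pow_div {r p : ℕ} (hr : 1 ≤ r) (hp : 1 < p) :
    alphaFactor r p =
      ((p : ℝ) - (if p ≤ r then 1 else r : ℕ)) * ((p : ℝ) / ((p : ℝ) - 1)) ^ r / p := by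
  obtain ⟨s, rfl⟩ : ∃ s, r = s + 1 := ⟨r - 1, by omega⟩
  have hp0 : (p : ℝ) ≠ 0 := by positivity
  have hp1 : (p : ℝ) - 1 ≠ 0 := sub_ne_zero.2 (by exact_mod_cast hp.ne')
  rw [alphaFactor, Nat.add_sub_cancel]
  split_ifs <;> push_cast [div_pow] <;> field_simp <;> ring

lemma betaP3_eq_alphaFactor_sq {r : ℕ} (hr : 1 ≤ r) (m x : ℤ) {p : ℕ} (hp : p.Prime) :
    betaP3 r m x p = alphaFactor r p ^ 2 := by
  have := Fact.mk hp
  have hp0 : (p : ℝ) ≠ 0 := by exact_mod_cast hp.ne_zero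
  rw [betaP3_eq_sum_zmod, sum_lamZMod_mul_of_eq_const fun a ha => by
    rw [sum_prod_lamZMod_affine ha], alphaFactor_eq_mul_pow_div hr hp.one_lt]
  field_simp

lemma one_sub_pow_le_one_sub_mul_add_sq (k : ℕ) {t : ℝ} (h0 : 0 ≤ t) (h1 : t ≤ 1) :
    (1 - t) ^ k ≤ 1 - k * t + k ^ 2 * t ^ 2 := by
  induction k with
  | zero => simp
  | succ k ih =>
    have step : (1 - t) ^ (k + 1) ≤ (1 - k * t + k ^ 2 * t ^ 2) * (1 - t) := by
      rw [pow_succ]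
      exact mul_le_mul_of_nonneg_right ih (by linarith)
    push_cast
    nlinarith [mul_nonneg (sq_nonneg ((k : ℝ) * t)) h0, sq_nonneg t]

lemma abs_one_sub_mul_div_one_sub_pow_sub_one_le (k : ℕ) {t : ℝ} (h0 : 0 ≤ t) (h1 : t ≤ 1)
    (hkt : k * t ≤ 1 / 2) : |(1 - k * t) / (1 - t) ^ k - 1| ≤ 2 * k ^ 2 * t ^ 2 := by
  have hlow : 1 - k * t ≤ (1 - t) ^ k := by
    simpa [sub_eq_add_neg] using one_add_mul_le_pow (a := -t) (by linarith) k
  have hup := one_sub_pow_le_one_sub_mul_add_sq k h0 h1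
  have hpos : 0 < (1 - t) ^ k := by linarith
  rw [abs_sub_comm, abs_of_nonneg (by rw [sub_nonneg, div_le_one hpos]; exact hlow),
    one_sub_div hpos.ne', div_le_iff₀ hpos]
  nlinarith [sq_nonneg ((k : ℝ) * t)]

lemma alphaFactor_eq_of_lt {r p : ℕ} (hr : 1 ≤ r) (hrp : r < p) :
    alphaFactor r p = (1 - r * (1 / p : ℝ)) / (1 - 1 / p : ℝ) ^ r := by
  obtain ⟨s, rfl⟩ : ∃ s, r = s + 1 := ⟨r - 1, by omega⟩
  have hp0 : (p : ℝ) ≠ 0 := by exact_mod_cast (by omega : p ≠ 0)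
  have hp1 : (p : ℝ) - 1 ≠ 0 := sub_ne_zero.2 (by exact_mod_cast (by omega : p ≠ 1))
  rw [alphaFactor, if_neg (by omega), Nat.add_sub_cancel, one_sub_div hp0, div_pow]
  push_cast
  field_simp
  ring

lemma abs_alphaFactor_sub_one_le {r p : ℕ} (hr : 1 ≤ r) (hrp : 2 * r ≤ p) :
    |alphaFactor r p - 1| ≤ 2 * r ^ 2 * (1 / (p : ℝ) ^ 2) := by
  have hp : (0 : ℝ) < p := by exact_mod_cast (by omega : 0 < p)
  have hp1 : (1 : ℝ) ≤ p := by exact_mod_cast (by omega : 1 ≤ p)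
  have hrp' : (2 * r : ℝ) ≤ p := by exact_mod_cast hrp
  rw [alphaFactor_eq_of_lt hr (by omega), ← one_div_pow]
  refine abs_one_sub_mul_div_one_sub_pow_sub_one_le r (by positivity)
    ((div_le_one hp).2 hp1) ?_
  rw [mul_one_div, div_le_iff₀ hp]
  linarith

lemma summable_alphaFactor_sub_one {r : ℕ} (hr : 1 ≤ r) :
    Summable fun p : Nat.Primes => alphaFactor r p - 1 := by
  have hg : Summable fun p : Nat.Primes => 2 * (r : ℝ) ^ 2 * (1 / ((p : ℕ) : ℝ) ^ 2) :=
    ((Real.summable_one_div_nat_pow.2 one_lt_two).comp_injective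
      Nat.Primes.coe_nat_injective).mul_left _
  have htends : Filter.Tendsto (fun p : Nat.Primes => (p : ℕ)) Filter.cofinite Filter.atTop :=
    Nat.cofinite_eq_atTop ▸ Nat.Primes.coe_nat_injective.tendsto_cofinite
  refine hg.of_norm_bounded_eventually ?_
  filter_upwards [htends.eventually_ge_atTop (2 * r)] with p hp
  exact abs_alphaFactor_sub_one_le hr hp

lemma multipliable_alphaFactor {r : ℕ} (hr : 1 ≤ r) :
    Multipliable fun p : Nat.Primes => alphaFactor r p := by
  simpa using Real.multipliable_one_add_of_summable (summable_alphaFactor_sub_one hr)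

/-- Computation of the local factors for the three-variable system: `β_p` equals
`(p/(p-1))^{2(r-1)}` for `p ≤ r` and `((p-r)p^{r-1}/(p-1)^r)²` for `p > r`;
consequently `∏_p β_p = α_r²`. -/
theorem stmt_10 (r : ℕ) (hr : 1 ≤ r) (m x : ℤ) :
    (∀ p : ℕ, p.Prime → betaP3 r m x p =
      (if p ≤ r then ((p : ℝ) / ((p : ℝ) - 1)) ^ (2 * (r - 1))
      else (((p : ℝ) - (r : ℝ)) * (p : ℝ) ^ (r - 1) / ((p : ℝ) - 1) ^ r) ^ 2)) ∧
    (∏' p : Nat.Primes, betaP3 r m x (p : ℕ)) =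
      (∏' p : Nat.Primes, alphaFactor r (p : ℕ)) ^ 2 := by
  refine ⟨fun p hp => ?_, ?_⟩
  · rw [betaP3_eq_alphaFactor_sq hr m x hp, alphaFactor]
    split_ifs <;> ring
  · rw [tprod_congr fun p : Nat.Primes => betaP3_eq_alphaFactor_sq hr m x p.2]
    exact (multipliable_alphaFactor hr).tprod_pow 2
end
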